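/- arXiv:1803.02815 — 8 statements merged into one kernel-verified Lean document; each statement's English description precedes it below -/
import Mathlib

section
/- Let f : H → ℝ be a convex differentiable function on a convex set H ⊆ ℝᵈ, and let x ≠ y ∈ H. Let v = (y - x)/‖y - x‖. If v · ∇f(x) ≥ -δ and -v · ∇f(y) ≥ -δ, then |f(x) - f(y)| ≤ ‖x - y‖·δ. -/
open scoped RealInnerProductSpace

/-! Restricted to the segment from `x` to `y`, the convex function `f` lies above its tangent
lines at both ends, which pins `f y - f x` between `⟪∇f x, y - x⟫ = ‖y - x‖ ⟪v, ∇f x⟫ ≥ -‖y - x‖ δ`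
and `⟪∇f y, y - x⟫ = ‖y - x‖ ⟪v, ∇f y⟫ ≤ ‖y - x‖ δ`. -/

open AffineMap Set in
theorem ConvexOn.le_sub_of_hasFDerivWithinAt {E : Type*} [NormedAddCommGroup E] [NormedSpace ℝ E]
    {s : Set E} {f : E → ℝ} {f' : E →L[ℝ] ℝ} {x y : E} (hf : ConvexOn ℝ s f) (hx : x ∈ s)
    (hy : y ∈ s) (hf' : HasFDerivWithinAt f f' s x) :
    f' (y - x) ≤ f y - f x := by
  have hmaps : MapsTo (lineMap x y) (Icc (0 : ℝ) 1) s := hf.1.mapsTo_lineMap hx hy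
  have hconv : ConvexOn ℝ (Icc 0 1) (f ∘ lineMap (k := ℝ) x y) :=
    (hf.comp_affineMap (lineMap x y)).subset hmaps (convex_Icc 0 1)
  have hderiv : HasDerivWithinAt (f ∘ lineMap (k := ℝ) x y) (f' (y - x)) (Icc 0 1) 0 :=
    (lineMap_apply_zero x y (k := ℝ) ▸ hf').comp_hasDerivWithinAt 0 hasDerivWithinAt_lineMap
      hmaps
  simpa [slope_def_field] using
    hconv.le_slope_of_hasDerivWithinAt (left_mem_Icc.2 zero_le_one) (right_mem_Icc.2 zero_le_one)
      zero_lt_one hderiv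

theorem ConvexOn.inner_le_sub_of_hasGradientAt {F : Type*} [NormedAddCommGroup F]
    [InnerProductSpace ℝ F] [CompleteSpace F] {s : Set F} {f : F → ℝ} {g x y : F}
    (hf : ConvexOn ℝ s f) (hx : x ∈ s) (hy : y ∈ s) (hg : HasGradientAt f g x) :
    ⟪g, y - x⟫ ≤ f y - f x := by
  simpa using hf.le_sub_of_hasFDerivWithinAt hx hy hg.hasFDerivAt.hasFDerivWithinAt

theorem convex_gradient_two_point_bound_general {d : ℕ}
    (H : Set (EuclideanSpace ℝ (Fin d)))
    (f : EuclideanSpace ℝ (Fin d) → ℝ)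
    (gf : EuclideanSpace ℝ (Fin d) → EuclideanSpace ℝ (Fin d))
    (x y : EuclideanSpace ℝ (Fin d)) (δ : ℝ)
    (hconv : ConvexOn ℝ H f)
    (hx : x ∈ H) (hy : y ∈ H)
    (hgrad : ∀ z ∈ H, HasGradientAt f (gf z) z)
    (v : EuclideanSpace ℝ (Fin d)) (hv : v = ‖y - x‖⁻¹ • (y - x))
    (h1 : -δ ≤ ⟪v, gf x⟫) (h2 : -δ ≤ -⟪v, gf y⟫) :
    |f x - f y| ≤ ‖x - y‖ * δ := by
  have hscale : ∀ w, ⟪w, y - x⟫ = ‖y - x‖ * ⟪v, w⟫ := fun w => by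
    conv_lhs => rw [← NormedSpace.norm_smul_normalize (y - x)]
    rw [real_inner_smul_right, hv, real_inner_comm, NormedSpace.normalize]
  have tangent_x := hconv.inner_le_sub_of_hasGradientAt hx hy (hgrad x hx)
  have tangent_y := hconv.inner_le_sub_of_hasGradientAt hy hx (hgrad y hy)
  rw [← neg_sub y x, inner_neg_right, hscale] at tangent_y
  rw [hscale] at tangent_x
  have hx_bound := mul_le_mul_of_nonneg_left h1 (norm_nonneg (y - x))
  have hy_bound := mul_le_mul_of_nonneg_left h2 (norm_nonneg (y - x))
  rw [abs_le, norm_sub_rev]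
  constructor <;> linarith

/-- Convex differentiable `f` on a convex set `H ⊆ ℝᵈ`: if the directional
derivatives at `x` toward `y` and at `y` away from `x` are both ≥ -δ, then
`|f x - f y| ≤ ‖x - y‖ * δ`. -/
theorem convex_gradient_two_point_bound {d : ℕ}
    (H : Set (EuclideanSpace ℝ (Fin d)))
    (f : EuclideanSpace ℝ (Fin d) → ℝ)
    (gf : EuclideanSpace ℝ (Fin d) → EuclideanSpace ℝ (Fin d))
    (x y : EuclideanSpace ℝ (Fin d)) (δ : ℝ)
    (hH : Convex ℝ H) (hconv : ConvexOn ℝ H f)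
    (hx : x ∈ H) (hy : y ∈ H) (hxy : x ≠ y) (hδ : 0 ≤ δ)
    (hgrad : ∀ z ∈ H, HasGradientAt f (gf z) z)
    (v : EuclideanSpace ℝ (Fin d)) (hv : v = ‖y - x‖⁻¹ • (y - x))
    (h1 : -δ ≤ ⟪v, gf x⟫) (h2 : -δ ≤ -⟪v, gf y⟫) :
    |f x - f y| ≤ ‖x - y‖ * δ :=
  convex_gradient_two_point_bound_general H f gf x y δ hconv hx hy hgrad v hv h1 h2
end

section
/- Let f : H → ℝ be a ξ-strongly convex differentiable function on a convex set H ⊆ ℝᵈ (meaning f(w) ≥ f(w₀) + ⟨w - w₀, ∇f(w₀)⟩ + (ξ/2)‖w - w₀‖² for all w, w₀ ∈ H), and let x ≠ y ∈ H with v = (y-x)/‖y-x‖. If v · ∇f(x) ≥ -δ and -v · ∇f(y) ≥ -δ, then ‖x - y‖ ≤ 2δ/ξ and |f(x) - f(y)| ≤ 2δ²/ξ. -/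
open scoped RealInnerProductSpace

/-- ξ-strongly convex differentiable `f` on a convex set `H ⊆ ℝᵈ`: if the
directional derivatives at distinct `x, y ∈ H` along the unit vector from `x`
to `y` are bounded by `δ`, then `‖x - y‖ ≤ 2δ/ξ` and `|f x - f y| ≤ 2δ²/ξ`. -/
theorem strongly_convex_gradient_two_point_bound {d : ℕ}
    (H : Set (EuclideanSpace ℝ (Fin d)))
    (f : EuclideanSpace ℝ (Fin d) → ℝ)
    (gf : EuclideanSpace ℝ (Fin d) → EuclideanSpace ℝ (Fin d))
    (x y : EuclideanSpace ℝ (Fin d)) (δ ξ : ℝ)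
    (hH : Convex ℝ H) (hξ : 0 < ξ)
    (hstrong : ∀ w ∈ H, ∀ w₀ ∈ H,
      f w₀ + ⟪w - w₀, gf w₀⟫ + ξ / 2 * ‖w - w₀‖ ^ 2 ≤ f w)
    (hx : x ∈ H) (hy : y ∈ H) (hxy : x ≠ y) (hδ : 0 ≤ δ)
    (hgrad : ∀ z ∈ H, HasGradientAt f (gf z) z)
    (v : EuclideanSpace ℝ (Fin d)) (hv : v = ‖y - x‖⁻¹ • (y - x))
    (h1 : -δ ≤ ⟪v, gf x⟫) (h2 : -δ ≤ -⟪v, gf y⟫) :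
    ‖x - y‖ ≤ 2 * δ / ξ ∧ |f x - f y| ≤ 2 * δ ^ 2 / ξ := by
  have hn : (0:ℝ) < ‖y - x‖ := by
    rw [norm_pos_iff]; exact sub_ne_zero.mpr (Ne.symm hxy)
  set n := ‖y - x‖ with hndef
  have hnxy : ‖x - y‖ = n := by rw [hndef, norm_sub_rev]
  have hvx : ⟪y - x, gf x⟫ = n * ⟪v, gf x⟫ := by
    rw [hv, real_inner_smul_left]
    field_simp
  have hvy : ⟪x - y, gf y⟫ = -(n * ⟪v, gf y⟫) := by
    have : x - y = -(y - x) := by abel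
    rw [this, inner_neg_left, hv, real_inner_smul_left]
    field_simp
  have A := hstrong y hy x hx
  have B := hstrong x hx y hy
  rw [hvx] at A
  rw [hvy, hnxy] at B
  -- distance bound
  have hdist : n ≤ 2 * δ / ξ := by
    rw [le_div_iff₀ hξ]
    nlinarith [mul_le_mul_of_nonneg_left h1 hn.le, mul_le_mul_of_nonneg_left h2 hn.le]
  constructor
  · rw [hnxy]; exact hdist
  · have hfy : f y - f x ≥ -(2 * δ ^ 2 / ξ) := by
      have h1' : -(δ * n) ≤ n * ⟪v, gf x⟫ := by
        nlinarith [mul_le_mul_of_nonneg_left h1 hn.le]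
      have hdn : δ * n ≤ δ * (2 * δ / ξ) := mul_le_mul_of_nonneg_left hdist hδ
      have : δ * (2 * δ / ξ) = 2 * δ ^ 2 / ξ := by ring
      nlinarith [sq_nonneg n]
    have hfx : f x - f y ≥ -(2 * δ ^ 2 / ξ) := by
      have h2' : -(δ * n) ≤ -(n * ⟪v, gf y⟫) := by
        nlinarith [mul_le_mul_of_nonneg_left h2 hn.le]
      have hdn : δ * n ≤ δ * (2 * δ / ξ) := mul_le_mul_of_nonneg_left hdist hδ
      have : δ * (2 * δ / ξ) = 2 * δ ^ 2 / ξ := by ring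
      nlinarith [sq_nonneg n]
    rw [abs_le]
    constructor <;> linarith
end

section
/- For all real t, |t| ≤ -ln(φ(t)·φ(-t)) ≤ |t| + 3·exp(-|t|), where φ(t) = 1/(1 + exp(-t)) is the logistic function. -/
/-- For the logistic function `φ(t) = 1/(1 + e^{-t})`,
`|t| ≤ -ln(φ(t)·φ(-t)) ≤ |t| + 3·e^{-|t|}` for all real `t`. -/
theorem logistic_log_bound
    (φ : ℝ → ℝ) (hφ : ∀ t, φ t = 1 / (1 + Real.exp (-t))) (t : ℝ) :
    |t| ≤ -Real.log (φ t * φ (-t)) ∧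
      -Real.log (φ t * φ (-t)) ≤ |t| + 3 * Real.exp (-|t|) := by
  have hpos : ∀ s : ℝ, (0:ℝ) < 1 + Real.exp (-s) := fun s => by positivity
  have hprod : φ t * φ (-t) = 1 / ((1 + Real.exp (-t)) * (1 + Real.exp t)) := by
    rw [hφ t, hφ (-t), neg_neg]; field_simp
  have hE : (1 + Real.exp (-t)) * (1 + Real.exp t)
      = Real.exp t + Real.exp (-t) + 2 := by
    have : Real.exp (-t) * Real.exp t = 1 := by
      rw [← Real.exp_add]; simp
    ring_nf
    nlinarith [this]
  set E : ℝ := Real.exp t + Real.exp (-t) + 2 with hEdef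
  have hEpos : 0 < E := by positivity
  have hlog : -Real.log (φ t * φ (-t)) = Real.log E := by
    rw [hprod, hE, Real.log_div one_ne_zero (ne_of_gt hEpos), Real.log_one]
    ring
  have hsym : Real.exp t + Real.exp (-t) = Real.exp |t| + Real.exp (-|t|) := by
    rcases abs_cases t with ⟨h, _⟩ | ⟨h, _⟩ <;> rw [h] <;> ring
  have hs : (0:ℝ) ≤ |t| := abs_nonneg t
  constructor
  · rw [hlog]
    have h1 : Real.exp |t| ≤ E := by
      rw [hEdef, hsym]; nlinarith [Real.exp_pos (-|t|)]
    calc |t| = Real.log (Real.exp |t|) := (Real.log_exp _).symm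
      _ ≤ Real.log E := Real.log_le_log (Real.exp_pos _) h1
  · rw [hlog, Real.log_le_iff_le_exp hEpos, Real.exp_add]
    have h2 : Real.exp (-|t|) ≤ 1 := Real.exp_le_one_iff.mpr (by linarith)
    have h3 : (1:ℝ) + 3 * Real.exp (-|t|) ≤ Real.exp (3 * Real.exp (-|t|)) := by
      have := Real.add_one_le_exp (3 * Real.exp (-|t|)); linarith
    have h4 : E ≤ Real.exp |t| + 3 := by rw [hEdef, hsym]; linarith
    have h5 : Real.exp |t| + 3 ≤ Real.exp |t| * Real.exp (3 * Real.exp (-|t|)) := by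
      have hexps : Real.exp |t| * Real.exp (-|t|) = 1 := by
        rw [← Real.exp_add]; simp
      nlinarith [Real.exp_pos |t|]
    linarith
end

section
/- Let P be a probability distribution that is a mixture P = (1-δ)Q + δR of distributions Q and R, with 0 ≤ δ < 1, and let f be a real-valued function with E_{X∼P}[f(X)²] < ∞. Then |E_{X∼P}[f(X)] - E_{X∼Q}[f(X)]| ≤ 2·√(δ·E_{X∼P}[f(X)²])/(1-δ). -/
/-!
Since `(1-δ)Q ≤ P` and `δR ≤ P`, Jensen's inequality gives `(1-δ)(E_Q f)² ≤ E_P f²` and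
`δ(E_R f)² ≤ E_P f²`. Linearity of the integral in the measure gives
`E_P f - E_Q f = δ(E_R f - E_Q f)`, and the two bounds control both terms.
-/

open MeasureTheory

namespace MeasureTheory

variable {α : Type*} [MeasurableSpace α]

lemma sq_integral_le_integral_sq (μ : Measure α) [IsProbabilityMeasure μ] {f : α → ℝ}
    (hf : MemLp f 2 μ) : (∫ x, f x ∂μ) ^ 2 ≤ ∫ x, f x ^ 2 ∂μ := by
  have h := ProbabilityTheory.variance_nonneg f μ
  rw [ProbabilityTheory.variance_eq_sub hf] at h
  simpa only [Pi.pow_apply, sub_nonneg] using h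

lemma MemLp.of_smul_measure_le {E : Type*} [NormedAddCommGroup E] {p : ENNReal}
    {μ ν : Measure α} {c : ENNReal} (hc0 : c ≠ 0) (hc : c ≠ ⊤) (hle : c • μ ≤ ν) {f : α → E}
    (hf : MemLp f p ν) : MemLp f p μ := by
  have h := (hf.mono_measure hle).smul_measure (ENNReal.inv_ne_top.mpr hc0)
  rwa [smul_smul, ENNReal.inv_mul_cancel hc0 hc, one_smul] at h

lemma mul_sq_integral_le_of_smul_le {μ ν : Measure α} [IsProbabilityMeasure μ] {c : ℝ}
    (hc : 0 ≤ c) (hle : ENNReal.ofReal c • μ ≤ ν) {f : α → ℝ} (hf : MemLp f 2 ν) :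
    c * (∫ x, f x ∂μ) ^ 2 ≤ ∫ x, f x ^ 2 ∂ν := by
  rcases hc.eq_or_lt with rfl | hc
  · simpa using integral_nonneg fun x => sq_nonneg (f x)
  have hfμ : MemLp f 2 μ :=
    hf.of_smul_measure_le (ENNReal.ofReal_pos.mpr hc).ne' ENNReal.ofReal_ne_top hle
  calc c * (∫ x, f x ∂μ) ^ 2 ≤ c * ∫ x, f x ^ 2 ∂μ :=
        mul_le_mul_of_nonneg_left (sq_integral_le_integral_sq μ hfμ) hc.le
    _ = ∫ x, f x ^ 2 ∂(ENNReal.ofReal c • μ) := by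
        rw [integral_smul_measure, ENNReal.toReal_ofReal hc.le, smul_eq_mul]
    _ ≤ ∫ x, f x ^ 2 ∂ν :=
        integral_mono_measure hle (ae_of_all _ fun x => sq_nonneg _) hf.integrable_sq

lemma integral_ofReal_smul_add_ofReal_smul {μ ν : Measure α} {a b : ℝ} (ha : 0 ≤ a)
    (hb : 0 ≤ b) {f : α → ℝ} (hf : Integrable f (ENNReal.ofReal a • μ + ENNReal.ofReal b • ν)) :
    ∫ x, f x ∂(ENNReal.ofReal a • μ + ENNReal.ofReal b • ν) =
      a * ∫ x, f x ∂μ + b * ∫ x, f x ∂ν := by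
  rw [integral_add_measure hf.left_of_add_measure hf.right_of_add_measure,
    integral_smul_measure, integral_smul_measure, ENNReal.toReal_ofReal ha,
    ENNReal.toReal_ofReal hb, smul_eq_mul, smul_eq_mul]

end MeasureTheory

lemma abs_mixture_mean_sub_le {δ A B S : ℝ} (hδ0 : 0 ≤ δ) (hδ1 : δ < 1)
    (hA : (1 - δ) * A ^ 2 ≤ S) (hB : δ * B ^ 2 ≤ S) :
    |(1 - δ) * A + δ * B - A| ≤ 2 * Real.sqrt (δ * S) / (1 - δ) := by
  have hS : 0 ≤ S := le_trans (by positivity) hB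
  have hB' : δ * |B| ≤ Real.sqrt (δ * S) := by
    rw [Real.le_sqrt (by positivity) (by positivity), mul_pow, sq_abs]
    nlinarith
  have hA' : δ * (1 - δ) * |A| ≤ Real.sqrt (δ * S) := by
    rw [Real.le_sqrt (mul_nonneg (mul_nonneg hδ0 (by linarith)) (abs_nonneg A)) (by positivity),
      mul_pow, sq_abs]
    have : δ ^ 2 * (1 - δ) ≤ δ := by nlinarith
    nlinarith [mul_le_mul_of_nonneg_left hA (by positivity : 0 ≤ δ ^ 2 * (1 - δ))]
  rw [le_div_iff₀ (by linarith)]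
  calc |(1 - δ) * A + δ * B - A| * (1 - δ) = δ * (1 - δ) * |B - A| := by
        rw [show (1 - δ) * A + δ * B - A = δ * (B - A) by ring, abs_mul, abs_of_nonneg hδ0]
        ring
    _ ≤ δ * (1 - δ) * (|B| + |A|) := by gcongr; exact abs_sub _ _
    _ ≤ δ * |B| + δ * (1 - δ) * |A| := by
        nlinarith [mul_nonneg (mul_nonneg hδ0 hδ0) (abs_nonneg B)]
    _ ≤ 2 * Real.sqrt (δ * S) := by linarith

/-- If `P = (1-δ)Q + δR` is a mixture of probability measures, `0 ≤ δ < 1`, and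
`f` is square-integrable w.r.t. `P`, then
`|E_P[f] - E_Q[f]| ≤ 2·√(δ·E_P[f²])/(1-δ)`. -/
theorem mixture_mean_shift_bound {α : Type*} [MeasurableSpace α]
    (P Q R : Measure α) [IsProbabilityMeasure P] [IsProbabilityMeasure Q]
    [IsProbabilityMeasure R]
    (δ : ℝ) (hδ0 : 0 ≤ δ) (hδ1 : δ < 1)
    (hmix : P = ENNReal.ofReal (1 - δ) • Q + ENNReal.ofReal δ • R)
    (f : α → ℝ) (hf : MemLp f 2 P) :
    |∫ x, f x ∂P - ∫ x, f x ∂Q| ≤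
      2 * Real.sqrt (δ * ∫ x, f x ^ 2 ∂P) / (1 - δ) := by
  have hQ : ENNReal.ofReal (1 - δ) • Q ≤ P := hmix ▸ Measure.le_add_right le_rfl
  have hR : ENNReal.ofReal δ • R ≤ P := hmix ▸ Measure.le_add_left le_rfl
  have hmean : ∫ x, f x ∂P = (1 - δ) * ∫ x, f x ∂Q + δ * ∫ x, f x ∂ R := by
    have hfi := hf.integrable one_le_two
    rw [hmix] at hfi ⊢
    exact integral_ofReal_smul_add_ofReal_smul (by linarith) hδ0 hfi
  rw [hmean]
  exact abs_mixture_mean_sub_le hδ0 hδ1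
    (mul_sq_integral_le_of_smul_le (by linarith) hQ hf)
    (mul_sq_integral_le_of_smul_le hδ0 hR hf)
end

section
/- Consider the linear model: Z = (X, Y) with Y = ⟨w*, X⟩ + E, where E is independent of X with E[E] = 0. For the loss f(w, z) = (y - ⟨w, x⟩)², the covariance of the gradient satisfies Cov[∇_w f(w, Z)] = 4·E[⟨w* - w, X⟩²·XXᵀ] + 4·Var[E]·Σ - 4·Σ(w* - w)(w* - w)ᵀΣ, where Σ = E[XXᵀ]. -/
open MeasureTheory ProbabilityTheory
open scoped RealInnerProductSpace

/-! Write `v = w* - w`, so that the gradient is `g = -2 (⟪v, X⟫ + E) X`. Because `E` is centred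
and independent of `X`, every term of `g` and of `g_i g_j` that is linear in `E` integrates to
zero, and `E[X_i X_j E²] = Σ_ij Var[E]`. Hence `E[g] = -2 Σ v` and
`E[g_i g_j] = 4 E[⟪v, X⟫² X_i X_j] + 4 Var[E] Σ_ij`, and since `Σ` is symmetric the product of
the means is the entry of `Σ v vᵀ Σ`. -/

section LinearRegression

open Matrix

variable {Ω ι : Type*} [MeasurableSpace Ω] {μ : Measure Ω}

lemma Matrix.IsSymm.mul_vecMulVec_self_mul {R : Type*} [CommSemiring R] [Fintype ι]
    {S : Matrix ι ι R} (hS : S.IsSymm) (v : ι → R) :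
    S * vecMulVec v v * S = vecMulVec (S *ᵥ v) (S *ᵥ v) := by
  rw [mul_vecMulVec, vecMulVec_mul, ← mulVec_transpose, hS.eq]

lemma integrable_of_integrable_mul_self [IsFiniteMeasure μ] {f : Ω → ℝ}
    (hf : AEStronglyMeasurable f μ) (hff : Integrable (fun ω => f ω * f ω) μ) :
    Integrable f μ :=
  ((memLp_two_iff_integrable_sq hf).mpr (by simpa only [sq] using hff)).integrable one_le_two

section Independence

variable {E F : Type*} [MeasurableSpace E] [MeasurableSpace F] {X : Ω → E} {Y : Ω → F}

lemma ProbabilityTheory.IndepFun.integral_comp_mul_comp_eq_mul (hindep : IndepFun X Y μ)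
    (hX : Measurable X) (hY : Measurable Y) {φ : E → ℝ} {ψ : F → ℝ} (hφ : Measurable φ)
    (hψ : Measurable ψ) :
    ∫ ω, φ (X ω) * ψ (Y ω) ∂μ = (∫ ω, φ (X ω) ∂μ) * ∫ ω, ψ (Y ω) ∂μ :=
  (hindep.comp hφ hψ).integral_fun_mul_eq_mul_integral
    (hφ.comp hX).aestronglyMeasurable (hψ.comp hY).aestronglyMeasurable

lemma ProbabilityTheory.IndepFun.integral_comp_mul_eq_zero {e : Ω → ℝ} (hindep : IndepFun X e μ)
    (hX : Measurable X) (he : Measurable e) (hmean : ∫ ω, e ω ∂μ = 0) {φ : E → ℝ}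
    (hφ : Measurable φ) : ∫ ω, φ (X ω) * e ω ∂μ = 0 := by
  simpa [hmean] using hindep.integral_comp_mul_comp_eq_mul hX he hφ (ψ := id) measurable_id

lemma ProbabilityTheory.IndepFun.integrable_comp_mul_comp (hindep : IndepFun X Y μ) {φ : E → ℝ}
    {ψ : F → ℝ} (hφ : Measurable φ) (hψ : Measurable ψ) (hφX : Integrable (fun ω => φ (X ω)) μ)
    (hψY : Integrable (fun ω => ψ (Y ω)) μ) : Integrable (fun ω => φ (X ω) * ψ (Y ω)) μ :=
  (hindep.comp hφ hψ).integrable_mul hφX hψY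

end Independence

noncomputable def secondMomentMatrix (μ : Measure Ω) (X : Ω → EuclideanSpace ℝ ι) :
    Matrix ι ι ℝ :=
  Matrix.of fun i j => ∫ ω, X ω i * X ω j ∂μ

lemma isSymm_secondMomentMatrix (X : Ω → EuclideanSpace ℝ ι) :
    (secondMomentMatrix μ X).IsSymm :=
  Matrix.IsSymm.ext fun i j => by simp only [secondMomentMatrix, of_apply, mul_comm]

/-- The gradient `∇_w (y - ⟪w, x⟫)²` at `y = ⟪w*, x⟫ + t`, written in terms of `v = w* - w`. -/
noncomputable def linRegGradient [Fintype ι] (v x : EuclideanSpace ℝ ι) (t : ℝ) :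
    EuclideanSpace ℝ ι :=
  (-2 * (⟪v, x⟫ + t)) • x

section Moments

variable [Fintype ι] {X : Ω → EuclideanSpace ℝ ι}

lemma apply_mul_inner_eq_sum (v x : EuclideanSpace ℝ ι) (k : ι) :
    x k * ⟪v, x⟫ = ∑ m, x k * x m * v m := by
  simp [EuclideanSpace.inner_eq_star_dotProduct, dotProduct, Finset.mul_sum, mul_assoc]

lemma integrable_apply_mul_inner (hXX : ∀ i j, Integrable (fun ω => X ω i * X ω j) μ)
    (v : EuclideanSpace ℝ ι) (k : ι) : Integrable (fun ω => X ω k * ⟪v, X ω⟫) μ := by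
  simp_rw [apply_mul_inner_eq_sum]
  exact integrable_finsetSum _ fun m _ => (hXX k m).mul_const _

lemma integral_apply_mul_inner (hXX : ∀ i j, Integrable (fun ω => X ω i * X ω j) μ)
    (v : EuclideanSpace ℝ ι) (k : ι) :
    ∫ ω, X ω k * ⟪v, X ω⟫ ∂μ = (secondMomentMatrix μ X *ᵥ v) k := by
  simp_rw [apply_mul_inner_eq_sum]
  rw [integral_finsetSum _ fun m _ => (hXX k m).mul_const _]
  simp only [integral_mul_const, mulVec, dotProduct, secondMomentMatrix, of_apply]

variable {e : Ω → ℝ}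

lemma integral_linRegGradient_apply [IsFiniteMeasure μ] (hX : Measurable X) (he : Measurable e)
    (hindep : IndepFun X e μ) (hmean : ∫ ω, e ω ∂μ = 0) (heInt : Integrable e μ)
    (hXX : ∀ i j, Integrable (fun ω => X ω i * X ω j) μ) (v : EuclideanSpace ℝ ι) (k : ι) :
    ∫ ω, linRegGradient v (X ω) (e ω) k ∂μ = -2 * (secondMomentMatrix μ X *ᵥ v) k := by
  have hXe : Integrable (fun ω => X ω k * e ω) μ :=
    hindep.integrable_comp_mul_comp (φ := fun x => x k) (by fun_prop) measurable_id
      (integrable_of_integrable_mul_self (by fun_prop) (hXX k k)) heInt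
  have hpt : ∀ ω, linRegGradient v (X ω) (e ω) k =
      -2 * (X ω k * ⟪v, X ω⟫) + -2 * (X ω k * e ω) := by
    intro ω
    simp only [linRegGradient, PiLp.smul_apply, smul_eq_mul]
    ring
  simp_rw [hpt]
  rw [integral_add ((integrable_apply_mul_inner hXX v k).const_mul _) (hXe.const_mul _),
    integral_const_mul, integral_const_mul, integral_apply_mul_inner hXX,
    hindep.integral_comp_mul_eq_zero hX he hmean (φ := fun x => x k) (by fun_prop)]
  ring

lemma integral_linRegGradient_mul_linRegGradient (hX : Measurable X) (he : Measurable e)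
    (hindep : IndepFun X e μ) (hmean : ∫ ω, e ω ∂μ = 0) (hvar : Integrable (fun ω => e ω ^ 2) μ)
    (hXX : ∀ i j, Integrable (fun ω => X ω i * X ω j) μ) (v : EuclideanSpace ℝ ι) (i j : ι)
    (hgg : Integrable
      (fun ω => linRegGradient v (X ω) (e ω) i * linRegGradient v (X ω) (e ω) j) μ)
    (hA : Integrable (fun ω => ⟪v, X ω⟫ ^ 2 * (X ω i * X ω j)) μ) :
    ∫ ω, linRegGradient v (X ω) (e ω) i * linRegGradient v (X ω) (e ω) j ∂μ =
      4 * ∫ ω, ⟪v, X ω⟫ ^ 2 * (X ω i * X ω j) ∂μ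
        + 4 * (secondMomentMatrix μ X i j * ∫ ω, e ω ^ 2 ∂μ) := by
  have hpt : ∀ ω, linRegGradient v (X ω) (e ω) i * linRegGradient v (X ω) (e ω) j =
      4 * (⟪v, X ω⟫ ^ 2 * (X ω i * X ω j)) + 8 * ((⟪v, X ω⟫ * (X ω i * X ω j)) * e ω)
        + 4 * ((X ω i * X ω j) * e ω ^ 2) := by
    intro ω
    simp only [linRegGradient, PiLp.smul_apply, smul_eq_mul]
    ring
  have hC : Integrable (fun ω => (X ω i * X ω j) * e ω ^ 2) μ :=
    hindep.integrable_comp_mul_comp (φ := fun x => x i * x j) (by fun_prop)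
      (measurable_id.pow_const 2) (hXX i j) hvar
  -- No third moments of `X` are assumed: the cross term is integrable as a combination of the others.
  have hB : Integrable (fun ω => (⟪v, X ω⟫ * (X ω i * X ω j)) * e ω) μ := by
    refine (((hgg.sub (hA.const_mul 4)).sub (hC.const_mul 4)).div_const 8).congr
      (ae_of_all _ fun ω => ?_)
    simp only [Pi.sub_apply, hpt]
    ring
  simp_rw [hpt]
  rw [integral_add ((hA.const_mul _).fun_add (hB.const_mul _)) (hC.const_mul _),
    integral_add (hA.const_mul _) (hB.const_mul _), integral_const_mul, integral_const_mul,
    integral_const_mul,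
    hindep.integral_comp_mul_eq_zero hX he hmean (φ := fun x => ⟪v, x⟫ * (x i * x j))
      (by fun_prop),
    hindep.integral_comp_mul_comp_eq_mul hX he (φ := fun x => x i * x j) (ψ := fun t => t ^ 2)
      (by fun_prop) (by fun_prop)]
  simp [secondMomentMatrix]

end Moments

end LinearRegression

theorem linreg_gradient_covariance_general {Ω : Type*} [MeasurableSpace Ω]
    (μ : Measure Ω) [IsProbabilityMeasure μ] {d : ℕ}
    (X : Ω → EuclideanSpace ℝ (Fin d)) (e : Ω → ℝ)
    (hX : Measurable X) (he : Measurable e)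
    (hindep : IndepFun X e μ)
    (hmean : (∫ ω, e ω ∂μ) = 0)
    (hvar : Integrable (fun ω => e ω ^ 2) μ)
    (heInt : Integrable e μ)
    (hXX : ∀ i j : Fin d, Integrable (fun ω => X ω i * X ω j) μ)
    (wstar w : EuclideanSpace ℝ (Fin d))
    (g : Ω → EuclideanSpace ℝ (Fin d))
    (hg : ∀ ω, g ω = (-2 * (⟪wstar - w, X ω⟫ + e ω)) • X ω)
    (hggInt : ∀ i j : Fin d, Integrable (fun ω => g ω i * g ω j) μ)
    (hA : ∀ i j : Fin d,
      Integrable (fun ω => ⟪wstar - w, X ω⟫ ^ 2 * (X ω i * X ω j)) μ)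
    (Sigma : Matrix (Fin d) (Fin d) ℝ)
    (hSigma : ∀ i j, Sigma i j = ∫ ω, X ω i * X ω j ∂μ)
    (M : Matrix (Fin d) (Fin d) ℝ)
    (hM : ∀ i j, M i j = (wstar - w) i * (wstar - w) j) :
    ∀ i j : Fin d,
      (∫ ω, g ω i * g ω j ∂μ) - (∫ ω, g ω i ∂μ) * (∫ ω, g ω j ∂μ) =
        4 * (∫ ω, ⟪wstar - w, X ω⟫ ^ 2 * (X ω i * X ω j) ∂μ)
          + 4 * variance e μ * Sigma i j
          - 4 * (Sigma * M * Sigma) i j := by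
  intro i j
  obtain rfl : g = fun ω => linRegGradient (wstar - w) (X ω) (e ω) := funext hg
  obtain rfl : Sigma = secondMomentMatrix μ X := Matrix.ext hSigma
  obtain rfl : M = Matrix.vecMulVec (wstar - w) (wstar - w) := Matrix.ext hM
  rw [integral_linRegGradient_mul_linRegGradient hX he hindep hmean hvar hXX _ i j (hggInt i j)
      (hA i j), integral_linRegGradient_apply hX he hindep hmean heInt hXX,
    integral_linRegGradient_apply hX he hindep hmean heInt hXX,
    (isSymm_secondMomentMatrix X).mul_vecMulVec_self_mul, Matrix.vecMulVec_apply,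
    variance_of_integral_eq_zero he.aemeasurable hmean]
  ring

/-- For linear regression `Y = ⟨w*, X⟩ + E` with `E` independent of `X` and
mean zero, and loss `f(w,(x,y)) = (y - ⟨w,x⟩)²` with gradient
`∇_w f = -2(⟨w*-w, x⟩ + e)·x`, the covariance matrix of the gradient is
`4·E[⟨w*-w,X⟩² XXᵀ] + 4·Var[E]·Σ - 4·Σ(w*-w)(w*-w)ᵀΣ` where `Σ = E[XXᵀ]`. -/
theorem linreg_gradient_covariance {Ω : Type*} [MeasurableSpace Ω]
    (μ : Measure Ω) [IsProbabilityMeasure μ] {d : ℕ}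
    (X : Ω → EuclideanSpace ℝ (Fin d)) (e : Ω → ℝ)
    (hX : Measurable X) (he : Measurable e)
    (hindep : IndepFun X e μ)
    (hmean : (∫ ω, e ω ∂μ) = 0)
    (hvar : Integrable (fun ω => e ω ^ 2) μ)
    (heInt : Integrable e μ)
    (hXX : ∀ i j : Fin d, Integrable (fun ω => X ω i * X ω j) μ)
    (wstar w : EuclideanSpace ℝ (Fin d))
    (g : Ω → EuclideanSpace ℝ (Fin d))
    (hg : ∀ ω, g ω = (-2 * (⟪wstar - w, X ω⟫ + e ω)) • X ω)
    (hgInt : ∀ i : Fin d, Integrable (fun ω => g ω i) μ)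
    (hggInt : ∀ i j : Fin d, Integrable (fun ω => g ω i * g ω j) μ)
    (hA : ∀ i j : Fin d,
      Integrable (fun ω => ⟪wstar - w, X ω⟫ ^ 2 * (X ω i * X ω j)) μ)
    (Sigma : Matrix (Fin d) (Fin d) ℝ)
    (hSigma : ∀ i j, Sigma i j = ∫ ω, X ω i * X ω j ∂μ)
    (M : Matrix (Fin d) (Fin d) ℝ)
    (hM : ∀ i j, M i j = (wstar - w) i * (wstar - w) j) :
    ∀ i j : Fin d,
      (∫ ω, g ω i * g ω j ∂μ) - (∫ ω, g ω i ∂μ) * (∫ ω, g ω j ∂μ) =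
        4 * (∫ ω, ⟪wstar - w, X ω⟫ ^ 2 * (X ω i * X ω j) ∂μ)
          + 4 * variance e μ * Sigma i j
          - 4 * (Sigma * M * Sigma) i j :=
  linreg_gradient_covariance_general μ X e hX he hindep hmean hvar heInt hXX wstar w g hg hggInt hA
    Sigma hSigma M hM
end

section
/- Under the linear regression model with E[XXᵀ] ⪯ σ²I, Var[E] ≤ ξ, and E[⟨v,X⟩⁴] ≤ Cσ⁴ for all unit vectors v, every unit vector v satisfies vᵀ·Cov[∇_w f(w, (X,Y))]·v ≤ 4σ²ξ + 4Cσ⁴‖w* - w‖₂². -/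
open MeasureTheory ProbabilityTheory
open scoped RealInnerProductSpace

/-! Writing `a = ⟪w* - w, X⟫` and `b = ⟪v, X⟫`, the projected gradient is `-2 (a b + b e)`.
Its variance is at most its second moment, and since `e` is centred and independent of `X` the
cross term vanishes, leaving `4 (E[a²b²] + E[b²] E[e²])`. The second summand is at most `σ²ξ`;
the first is at most `Cσ⁴‖w* - w‖²` by `a²b² ≤ (a⁴ + b⁴) / 2` once `w* - w` is normalised to a
unit vector. -/

instance ENNReal.holderTriple_four_four_two : ENNReal.HolderTriple 4 4 2 where
  inv_add_inv_eq_inv := by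
    rw [← two_mul, show (4 : ENNReal) = 2 * 2 by norm_num, ENNReal.mul_inv (by simp) (by simp),
      ← mul_assoc, ENNReal.mul_inv_cancel (by simp) (by simp), one_mul]

section

variable {Ω : Type*} [MeasurableSpace Ω] {μ : Measure Ω}

lemma memLp_four_of_integrable_pow_four {f : Ω → ℝ} (hf : AEStronglyMeasurable f μ)
    (h4 : Integrable (fun ω => f ω ^ 4) μ) : MemLp f 4 μ := by
  refine (integrable_norm_rpow_iff hf (by norm_num) (by norm_num)).1 ?_
  convert h4 using 2 with ω
  rw [Real.norm_eq_abs, ENNReal.toReal_ofNat, Real.rpow_ofNat, Even.pow_abs (by decide)]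

lemma integral_sq_mul_sq_le {f g : Ω → ℝ} (hf : Integrable (fun ω => f ω ^ 4) μ)
    (hg : Integrable (fun ω => g ω ^ 4) μ) :
    ∫ ω, f ω ^ 2 * g ω ^ 2 ∂μ ≤ (∫ ω, f ω ^ 4 ∂μ + ∫ ω, g ω ^ 4 ∂μ) / 2 := by
  rw [← integral_add hf hg, ← integral_div]
  refine integral_mono_of_nonneg (ae_of_all _ fun ω => by positivity) ((hf.add hg).div_const 2)
    (ae_of_all _ fun ω => ?_)
  nlinarith [sq_nonneg (f ω ^ 2 - g ω ^ 2)]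

lemma integral_add_mul_sq_of_indepFun [IsProbabilityMeasure μ] {A B e : Ω → ℝ}
    (hA : MemLp A 2 μ) (hB : MemLp B 2 μ) (he : MemLp e 2 μ)
    (hindep : IndepFun (fun ω => (A ω, B ω)) e μ) (hmean : ∫ ω, e ω ∂μ = 0) :
    ∫ ω, (A ω + B ω * e ω) ^ 2 ∂μ =
      ∫ ω, A ω ^ 2 ∂μ + (∫ ω, B ω ^ 2 ∂μ) * ∫ ω, e ω ^ 2 ∂μ := by
  have hABe : IndepFun (fun ω => A ω * B ω) e μ :=
    hindep.comp (φ := fun p : ℝ × ℝ => p.1 * p.2) (by fun_prop) measurable_id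
  have hBe : IndepFun (fun ω => B ω ^ 2) (fun ω => e ω ^ 2) μ :=
    hindep.comp (φ := fun p : ℝ × ℝ => p.2 ^ 2) (ψ := fun t : ℝ => t ^ 2) (by fun_prop)
      (by fun_prop)
  have hABe_int : Integrable (fun ω => A ω * B ω * e ω) μ :=
    hABe.integrable_mul (hA.integrable_mul hB) (he.integrable one_le_two)
  have hBe_int : Integrable (fun ω => B ω ^ 2 * e ω ^ 2) μ :=
    hBe.integrable_mul hB.integrable_sq he.integrable_sq
  have hA_ABe_int : Integrable (fun ω => A ω ^ 2 + 2 * (A ω * B ω * e ω)) μ :=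
    hA.integrable_sq.add (hABe_int.const_mul 2)
  calc ∫ ω, (A ω + B ω * e ω) ^ 2 ∂μ
      = ∫ ω, (A ω ^ 2 + 2 * (A ω * B ω * e ω)) + B ω ^ 2 * e ω ^ 2 ∂μ := by
        congr with ω; ring
    _ = ∫ ω, A ω ^ 2 ∂μ + 2 * ∫ ω, A ω * B ω * e ω ∂μ + ∫ ω, B ω ^ 2 * e ω ^ 2 ∂μ := by
        rw [integral_add hA_ABe_int hBe_int,
          integral_add hA.integrable_sq (hABe_int.const_mul 2), integral_const_mul]
    _ = ∫ ω, A ω ^ 2 ∂μ + (∫ ω, B ω ^ 2 ∂μ) * ∫ ω, e ω ^ 2 ∂μ := by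
        rw [hABe.integral_fun_mul_eq_mul_integral
            (hA.aestronglyMeasurable.mul hB.aestronglyMeasurable) he.aestronglyMeasurable,
          hBe.integral_fun_mul_eq_mul_integral (hB.aestronglyMeasurable.pow 2)
            (he.aestronglyMeasurable.pow 2), hmean, mul_zero, mul_zero, add_zero]

end

section

variable {Ω E : Type*} [MeasurableSpace Ω] {μ : Measure Ω}
  [NormedAddCommGroup E] [InnerProductSpace ℝ E]

lemma integral_inner_sq_mul_inner_sq_le {X : Ω → E} {K : ℝ}
    (hfourth : ∀ v : E, ‖v‖ = 1 → ∫ ω, ⟪v, X ω⟫ ^ 4 ∂μ ≤ K)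
    (h4int : ∀ v : E, Integrable (fun ω => ⟪v, X ω⟫ ^ 4) μ) (u : E) {v : E} (hv : ‖v‖ = 1) :
    ∫ ω, ⟪u, X ω⟫ ^ 2 * ⟪v, X ω⟫ ^ 2 ∂μ ≤ K * ‖u‖ ^ 2 := by
  rcases eq_or_ne u 0 with rfl | hu
  · simp
  set û : E := ‖u‖⁻¹ • u
  have hscale : ∀ ω, ⟪u, X ω⟫ ^ 2 * ⟪v, X ω⟫ ^ 2 = ‖u‖ ^ 2 * (⟪û, X ω⟫ ^ 2 * ⟪v, X ω⟫ ^ 2) := by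
    intro ω
    rw [real_inner_smul_left]
    field_simp
  calc ∫ ω, ⟪u, X ω⟫ ^ 2 * ⟪v, X ω⟫ ^ 2 ∂μ
      = ‖u‖ ^ 2 * ∫ ω, ⟪û, X ω⟫ ^ 2 * ⟪v, X ω⟫ ^ 2 ∂μ := by
        simp_rw [hscale]; exact integral_const_mul _ _
    _ ≤ ‖u‖ ^ 2 * ((K + K) / 2) := by
        gcongr
        refine (integral_sq_mul_sq_le (h4int û) (h4int v)).trans ?_
        gcongr
        exacts [hfourth û (norm_smul_inv_norm hu), hfourth v hv]
    _ = K * ‖u‖ ^ 2 := by ring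

end

theorem linreg_gradient_covariance_bound_general {Ω : Type*} [MeasurableSpace Ω]
    (μ : Measure Ω) [IsProbabilityMeasure μ] {d : ℕ}
    (X : Ω → EuclideanSpace ℝ (Fin d)) (e : Ω → ℝ)
    (hX : Measurable X) (he : Measurable e)
    (hindep : IndepFun X e μ)
    (hmean : (∫ ω, e ω ∂μ) = 0)
    (he2Int : Integrable (fun ω => e ω ^ 2) μ)
    (σ ξ C : ℝ)
    (hcov : ∀ v : EuclideanSpace ℝ (Fin d), ‖v‖ = 1 →
      (∫ ω, ⟪v, X ω⟫ ^ 2 ∂μ) ≤ σ ^ 2)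
    (hvar : variance e μ ≤ ξ)
    (hfourth : ∀ v : EuclideanSpace ℝ (Fin d), ‖v‖ = 1 →
      (∫ ω, ⟪v, X ω⟫ ^ 4 ∂μ) ≤ C * σ ^ 4)
    (h4int : ∀ v : EuclideanSpace ℝ (Fin d),
      Integrable (fun ω => ⟪v, X ω⟫ ^ 4) μ)
    (wstar w : EuclideanSpace ℝ (Fin d))
    (g : Ω → EuclideanSpace ℝ (Fin d))
    (hg : ∀ ω, g ω = (-2 * (⟪wstar - w, X ω⟫ + e ω)) • X ω) :
    ∀ v : EuclideanSpace ℝ (Fin d), ‖v‖ = 1 →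
      variance (fun ω => ⟪v, g ω⟫) μ ≤
        4 * σ ^ 2 * ξ + 4 * C * σ ^ 4 * ‖wstar - w‖ ^ 2 := by
  intro v hv
  set a : Ω → ℝ := fun ω => ⟪wstar - w, X ω⟫
  set b : Ω → ℝ := fun ω => ⟪v, X ω⟫
  have hL4 (u : EuclideanSpace ℝ (Fin d)) : MemLp (fun ω => ⟪u, X ω⟫) 4 μ :=
    memLp_four_of_integrable_pow_four (measurable_const.inner hX).aestronglyMeasurable (h4int u)
  have he2 : MemLp e 2 μ := (memLp_two_iff_integrable_sq he.aestronglyMeasurable).2 he2Int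
  have hpair : IndepFun (fun ω => (a ω * b ω, b ω)) e μ :=
    hindep.comp (φ := fun x => (⟪wstar - w, x⟫ * ⟪v, x⟫, ⟪v, x⟫)) (by fun_prop) measurable_id
  have hab : MemLp (fun ω => a ω * b ω) 2 μ := (hL4 v).mul' (hL4 (wstar - w))
  have hb : MemLp b 2 μ := (hL4 v).mono_exponent (by norm_num)
  have hZ : (fun ω => ⟪v, g ω⟫) = fun ω => -2 * (a ω * b ω + b ω * e ω) := by
    funext ω; rw [hg, real_inner_smul_right]; ring
  rw [hZ]
  calc variance (fun ω => -2 * (a ω * b ω + b ω * e ω)) μ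
      ≤ ∫ ω, (-2 * (a ω * b ω + b ω * e ω)) ^ 2 ∂μ := variance_le_expectation_sq (by fun_prop)
    _ = 4 * (∫ ω, a ω ^ 2 * b ω ^ 2 ∂μ + (∫ ω, b ω ^ 2 ∂μ) * ∫ ω, e ω ^ 2 ∂μ) := by
        have hexpand := integral_add_mul_sq_of_indepFun hab hb he2 hpair hmean
        simp only [mul_pow] at hexpand ⊢
        rw [integral_const_mul, hexpand]
        norm_num
    _ ≤ 4 * (C * σ ^ 4 * ‖wstar - w‖ ^ 2 + σ ^ 2 * ξ) := by
        have hmixed := integral_inner_sq_mul_inner_sq_le hfourth h4int (wstar - w) hv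
        have hsecond := hcov v hv
        have hvar_nonneg := variance_nonneg e μ
        rw [← variance_of_integral_eq_zero he.aemeasurable hmean]
        gcongr
    _ = 4 * σ ^ 2 * ξ + 4 * C * σ ^ 4 * ‖wstar - w‖ ^ 2 := by ring

/-- For linear regression with `E[XXᵀ] ⪯ σ²I`, `Var[E] ≤ ξ`, and fourth moments
`E[⟨v,X⟩⁴] ≤ Cσ⁴` for unit `v`, every unit vector `v` satisfies
`vᵀ Cov[∇_w f(w,(X,Y))] v ≤ 4σ²ξ + 4Cσ⁴‖w*-w‖²`. -/
theorem linreg_gradient_covariance_bound {Ω : Type*} [MeasurableSpace Ω]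
    (μ : Measure Ω) [IsProbabilityMeasure μ] {d : ℕ}
    (X : Ω → EuclideanSpace ℝ (Fin d)) (e : Ω → ℝ)
    (hX : Measurable X) (he : Measurable e)
    (hindep : IndepFun X e μ)
    (hmean : (∫ ω, e ω ∂μ) = 0)
    (heInt : Integrable e μ) (he2Int : Integrable (fun ω => e ω ^ 2) μ)
    (σ ξ C : ℝ) (hσ : 0 < σ) (hξ : 0 ≤ ξ) (hC : 0 < C)
    (hcov : ∀ v : EuclideanSpace ℝ (Fin d), ‖v‖ = 1 →
      (∫ ω, ⟪v, X ω⟫ ^ 2 ∂μ) ≤ σ ^ 2)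
    (hvar : variance e μ ≤ ξ)
    (hfourth : ∀ v : EuclideanSpace ℝ (Fin d), ‖v‖ = 1 →
      (∫ ω, ⟪v, X ω⟫ ^ 4 ∂μ) ≤ C * σ ^ 4)
    (h4int : ∀ v : EuclideanSpace ℝ (Fin d),
      Integrable (fun ω => ⟪v, X ω⟫ ^ 4) μ)
    (wstar w : EuclideanSpace ℝ (Fin d))
    (g : Ω → EuclideanSpace ℝ (Fin d))
    (hg : ∀ ω, g ω = (-2 * (⟪wstar - w, X ω⟫ + e ω)) • X ω) :
    ∀ v : EuclideanSpace ℝ (Fin d), ‖v‖ = 1 →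
      variance (fun ω => ⟪v, g ω⟫) μ ≤
        4 * σ ^ 2 * ξ + 4 * C * σ ^ 4 * ‖wstar - w‖ ^ 2 :=
  linreg_gradient_covariance_bound_general μ X e hX he hindep hmean he2Int σ ξ C hcov hvar hfourth
    h4int wstar w g hg
end

section
/- Let D be a distribution over (X, Y) ∈ ℝᵈ × {±1} whose X-marginal is ε^{1/4}-anticoncentrated (at most an O(ε^{1/4}) fraction of mass lies within Euclidean distance ε^{1/4} of any hyperplane). Let w* ∈ ℝᵈ and let w' = min{1, ε^{-1/4}/‖w*‖}·w*. Then E[L(w', (X,Y))] ≤ E[L(w*, (X,Y))] + O(ε^{1/4}), where L is the hinge loss. -/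
open MeasureTheory
open scoped RealInnerProductSpace

/-!
Shrinking `w*` by a factor `t ≤ 1` can only lower the hinge loss at points where the margin
`|⟪w', x⟫|` of `w' = t • w*` exceeds `1`: there `y⟪w', x⟫ ≥ 1` costs nothing, and
`y⟪w', x⟫ < -1` forces `y⟪w*, x⟫ ≤ y⟪w', x⟫`. On the slab `|⟪w', x⟫| ≤ 1` the loss of `w'` is at
most `2`. When `‖w'‖ = ε^{-1/4}` this slab is the `ε^{1/4}`-neighbourhood of the hyperplane
`w'⊥`, whose mass is at most `c ε^{1/4}` by anticoncentration.
-/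

section HingeLoss

variable {E : Type*} [NormedAddCommGroup E] [InnerProductSpace ℝ E]

def hingeLoss (w x : E) (y : ℝ) : ℝ := max 0 (1 - y * ⟪w, x⟫)

lemma hingeLoss_nonneg (w x : E) (y : ℝ) : 0 ≤ hingeLoss w x y := le_max_left _ _

lemma abs_inner_le_one_iff {v : E} (hv : v ≠ 0) (x : E) :
    |⟪v, x⟫| ≤ 1 ↔ |⟪‖v‖⁻¹ • v, x⟫| ≤ ‖v‖⁻¹ := by
  rw [real_inner_smul_left, abs_mul, abs_inv, abs_norm,
    mul_le_iff_le_one_right (inv_pos.mpr (norm_pos_iff.mpr hv))]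

lemma max_zero_one_sub_mul_le {t z : ℝ} (ht0 : 0 ≤ t) (ht1 : t ≤ 1) (hz : 1 < |t * z|) :
    max 0 (1 - t * z) ≤ max 0 (1 - z) := by
  rcases lt_abs.mp hz with hpos | hneg
  · rw [max_eq_left (by linarith)]
    exact le_max_left _ _
  · have hz0 : z < 0 := by nlinarith
    have hle : z ≤ t * z := by nlinarith
    exact max_le_max le_rfl (by linarith)

lemma hingeLoss_le_two {w x : E} {y : ℝ} (hy : |y| = 1) (hwx : |⟪w, x⟫| ≤ 1) :
    hingeLoss w x y ≤ 2 := by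
  have : |y * ⟪w, x⟫| ≤ 1 := by rwa [abs_mul, hy, one_mul]
  exact max_le zero_le_two (by linarith [neg_abs_le (y * ⟪w, x⟫)])

lemma hingeLoss_smul_le_add_indicator {t : ℝ} (ht0 : 0 ≤ t) (ht1 : t ≤ 1) (w : E)
    {p : E × ℝ} (hy : |p.2| = 1) :
    hingeLoss (t • w) p.1 p.2 ≤
      hingeLoss w p.1 p.2 + {q : E × ℝ | |⟪t • w, q.1⟫| ≤ 1}.indicator (fun _ => 2) p := by
  by_cases hslab : p ∈ {q : E × ℝ | |⟪t • w, q.1⟫| ≤ 1}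
  · rw [Set.indicator_of_mem hslab]
    linarith [hingeLoss_le_two hy hslab, hingeLoss_nonneg w p.1 p.2]
  · rw [Set.indicator_of_notMem hslab, add_zero]
    have hmul : p.2 * ⟪t • w, p.1⟫ = t * (p.2 * ⟪w, p.1⟫) := by
      rw [real_inner_smul_left]; ring
    rw [hingeLoss, hingeLoss, hmul]
    refine max_zero_one_sub_mul_le ht0 ht1 ?_
    rwa [← hmul, abs_mul, hy, one_mul, ← not_le]

lemma integral_hingeLoss_smul_le [MeasurableSpace E] [OpensMeasurableSpace E]
    (μ : Measure (E × ℝ)) [IsFiniteMeasure μ] (hy : ∀ᵐ p ∂μ, |p.2| = 1)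
    {t : ℝ} (ht0 : 0 ≤ t) (ht1 : t ≤ 1) (w : E)
    (hw : Integrable (fun p => hingeLoss w p.1 p.2) μ)
    (htw : Integrable (fun p => hingeLoss (t • w) p.1 p.2) μ) :
    ∫ p, hingeLoss (t • w) p.1 p.2 ∂μ ≤
      ∫ p, hingeLoss w p.1 p.2 ∂μ + 2 * μ.real {p | |⟪t • w, p.1⟫| ≤ 1} := by
  set S := {p : E × ℝ | |⟪t • w, p.1⟫| ≤ 1}
  have hS : MeasurableSet S :=
    measurableSet_le
      ((continuous_const.inner continuous_id).abs.measurable.comp measurable_fst)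
      measurable_const
  have hind : Integrable (S.indicator fun _ => (2 : ℝ)) μ :=
    (integrable_const 2).indicator hS
  calc ∫ p, hingeLoss (t • w) p.1 p.2 ∂μ
      ≤ ∫ p, (hingeLoss w p.1 p.2 + S.indicator (fun _ => 2) p) ∂μ :=
        integral_mono_ae htw (hw.add hind)
          (hy.mono fun _ hp => hingeLoss_smul_le_add_indicator ht0 ht1 w hp)
    _ = ∫ p, hingeLoss w p.1 p.2 ∂μ + 2 * μ.real S := by
        rw [integral_add hw hind, integral_indicator_const 2 hS, smul_eq_mul, mul_comm]

lemma measureReal_abs_inner_le_one_le [MeasurableSpace E] {μ : Measure (E × ℝ)} {r a : ℝ}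
    (hr : 0 < r) (ha : 0 ≤ a)
    (hanti : ∀ u : E, ‖u‖ = 1 → μ {p | |⟪u, p.1⟫| ≤ r} ≤ ENNReal.ofReal a)
    {v : E} (hv : ‖v‖ = r⁻¹) :
    μ.real {p | |⟪v, p.1⟫| ≤ 1} ≤ a := by
  have hv0 : v ≠ 0 := norm_pos_iff.mp (hv ▸ inv_pos.mpr hr)
  have hslab : {p : E × ℝ | |⟪v, p.1⟫| ≤ 1} = {p | |⟪‖v‖⁻¹ • v, p.1⟫| ≤ r} := by
    ext p
    rw [Set.mem_ofPred_eq, Set.mem_ofPred_eq, abs_inner_le_one_iff hv0, hv, inv_inv]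
  rw [measureReal_def, hslab]
  exact ENNReal.toReal_le_of_le_ofReal ha (hanti _ (norm_smul_inv_norm hv0))

end HingeLoss

section Rescaling

variable {E : Type*} [NormedAddCommGroup E] [NormedSpace ℝ E]

lemma min_one_div_norm_smul_of_norm_le {R : ℝ} {w : E} (hw : ‖w‖ ≤ R) :
    min 1 (R / ‖w‖) • w = w := by
  rcases eq_or_ne w 0 with rfl | hw0
  · exact smul_zero _
  · rw [min_eq_left ((one_le_div (norm_pos_iff.mpr hw0)).mpr hw), one_smul]

lemma norm_div_norm_smul {R : ℝ} (hR : 0 ≤ R) {w : E} (hw : w ≠ 0) :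
    ‖(R / ‖w‖) • w‖ = R := by
  rw [norm_smul, Real.norm_of_nonneg (by positivity),
    div_mul_cancel₀ _ (norm_ne_zero_iff.mpr hw)]

end Rescaling

/-- If the X-marginal of a distribution over `ℝᵈ × {±1}` is
`ε^{1/4}`-anticoncentrated (at most a `c·ε^{1/4}` fraction of mass within
distance `ε^{1/4}` of any hyperplane), and `w'` is the rescaling of `w*` to
norm at most `ε^{-1/4}`, then the expected hinge loss of `w'` exceeds that of
`w*` by at most `O(ε^{1/4})` (a constant depending only on `c`). -/
theorem hinge_loss_rescaling_anticoncentrated (c : ℝ) (hc : 0 ≤ c) :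
    ∃ C : ℝ, 0 < C ∧
      ∀ (d : ℕ) (μ : Measure (EuclideanSpace ℝ (Fin d) × ℝ))
        (_ : IsProbabilityMeasure μ)
        (ε : ℝ), 0 < ε → ε < 1 →
        ∀ (L : EuclideanSpace ℝ (Fin d) → EuclideanSpace ℝ (Fin d) → ℝ → ℝ),
        (∀ w x y, L w x y = max 0 (1 - y * ⟪w, x⟫)) →
        (∀ᵐ p ∂μ, p.2 = 1 ∨ p.2 = -1) →
        -- anticoncentration of the X-marginal
        (∀ (u : EuclideanSpace ℝ (Fin d)) (b : ℝ), ‖u‖ = 1 →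
          μ {p | |⟪u, p.1⟫ - b| ≤ ε ^ ((1:ℝ)/4)} ≤
            ENNReal.ofReal (c * ε ^ ((1:ℝ)/4))) →
        ∀ (wstar w' : EuclideanSpace ℝ (Fin d)),
          w' = min 1 (ε ^ (-(1:ℝ)/4) / ‖wstar‖) • wstar →
          Integrable (fun p => L wstar p.1 p.2) μ →
          Integrable (fun p => L w' p.1 p.2) μ →
          (∫ p, L w' p.1 p.2 ∂μ) ≤
            (∫ p, L wstar p.1 p.2 ∂μ) + C * ε ^ ((1:ℝ)/4) := by
  refine ⟨2 * c + 1, by positivity, ?_⟩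
  intro d μ _ ε hε _ L hL hy hanti wstar w' hw' hwstar_int hw'_int
  obtain rfl : L = hingeLoss := funext₃ hL
  set r := ε ^ ((1 : ℝ) / 4)
  have hr : 0 < r := by positivity
  have hR : ε ^ (-(1 : ℝ) / 4) = r⁻¹ := by rw [neg_div, Real.rpow_neg hε.le]
  rw [hR] at hw'
  rcases le_or_gt ‖wstar‖ r⁻¹ with hsmall | hlarge
  · rw [min_one_div_norm_smul_of_norm_le hsmall] at hw'
    subst hw'
    linarith [show 0 ≤ (2 * c + 1) * r by positivity]
  have hwstar : wstar ≠ 0 := norm_pos_iff.mp ((inv_pos.mpr hr).trans hlarge)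
  have ht1 : r⁻¹ / ‖wstar‖ ≤ 1 := (div_le_one (by positivity)).mpr hlarge.le
  rw [min_eq_right ht1] at hw'
  have hnorm : ‖w'‖ = r⁻¹ := hw' ▸ norm_div_norm_smul (inv_pos.mpr hr).le hwstar
  have hslab : μ.real {p | |⟪w', p.1⟫| ≤ 1} ≤ c * r :=
    measureReal_abs_inner_le_one_le hr (by positivity)
      (fun u hu => by simpa only [sub_zero] using hanti u 0 hu) hnorm
  have hy_abs : ∀ᵐ p ∂μ, |p.2| = 1 := hy.mono fun p hp => by rcases hp with h | h <;> simp [h]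
  subst hw'
  linarith [integral_hingeLoss_smul_le μ hy_abs (by positivity) ht1 wstar hwstar_int hw'_int]
end

section
/- Define the logistic loss L(w,(x,y)) = (1/2)(-ln(φ(⟨w,x⟩)φ(-⟨w,x⟩)) - y⟨w,x⟩) with φ(t) = 1/(1+e^{-t}) and y ∈ {±1}. Then for any w' = c·w* with c ∈ (0,1], any x ∈ ℝᵈ, and any y ∈ {±1}: L(w', (x,y)) ≤ L(w*, (x,y)) + (3/2)·exp(-|⟨w', x⟩|). -/
open scoped RealInnerProductSpace

lemma neg_log_phi (u : ℝ) :
    -Real.log ((1 / (1 + Real.exp (-u))) * (1 / (1 + Real.exp (-(-u))))) =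
      Real.log (Real.exp u + Real.exp (-u) + 2) := by
  have h1 : (0:ℝ) < 1 + Real.exp (-u) := by positivity
  have h2 : (0:ℝ) < 1 + Real.exp u := by positivity
  have hmul : Real.exp (-u) * Real.exp u = 1 := by
    rw [← Real.exp_add]; simp
  have : (1 / (1 + Real.exp (-u))) * (1 / (1 + Real.exp (-(-u)))) =
      1 / (Real.exp u + Real.exp (-u) + 2) := by
    rw [neg_neg, div_mul_div_comm, one_mul]
    congr 1
    nlinarith [hmul]
  rw [this, one_div, Real.log_inv, neg_neg]

lemma log_bounds_lower (u : ℝ) : |u| ≤ Real.log (Real.exp u + Real.exp (-u) + 2) := by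
  have h : Real.exp |u| ≤ Real.exp u + Real.exp (-u) + 2 := by
    rcases abs_cases u with ⟨h1, _⟩ | ⟨h1, _⟩ <;> rw [h1] <;>
      nlinarith [Real.exp_pos u, Real.exp_pos (-u)]
  calc |u| = Real.log (Real.exp |u|) := (Real.log_exp _).symm
    _ ≤ _ := Real.log_le_log (Real.exp_pos _) h

lemma log_bounds_upper (u : ℝ) :
    Real.log (Real.exp u + Real.exp (-u) + 2) ≤ |u| + 3 * Real.exp (-|u|) := by
  have hle : Real.exp u + Real.exp (-u) + 2 ≤ Real.exp |u| * (1 + 3 * Real.exp (-|u|)) := by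
    have hm : Real.exp u * Real.exp (-u) = 1 := by rw [← Real.exp_add]; simp
    rcases abs_cases u with ⟨h2, hu⟩ | ⟨h2, hu⟩ <;> rw [h2]
    · have h1 : Real.exp (-u) ≤ 1 := Real.exp_le_one_iff.mpr (by linarith)
      nlinarith [Real.exp_pos u, Real.exp_pos (-u)]
    · have h1 : Real.exp u ≤ 1 := Real.exp_le_one_iff.mpr (by linarith)
      rw [neg_neg]
      nlinarith [Real.exp_pos u, Real.exp_pos (-u)]
  calc Real.log (Real.exp u + Real.exp (-u) + 2)
      ≤ Real.log (Real.exp |u| * (1 + 3 * Real.exp (-|u|))) :=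
        Real.log_le_log (by positivity) hle
    _ = |u| + Real.log (1 + 3 * Real.exp (-|u|)) := by
        rw [Real.log_mul (by positivity) (by positivity), Real.log_exp]
    _ ≤ |u| + 3 * Real.exp (-|u|) := by
        have := Real.log_le_sub_one_of_pos (show (0:ℝ) < 1 + 3 * Real.exp (-|u|) by positivity)
        linarith

/-- Logistic loss `L(w,(x,y)) = (1/2)(-ln(φ(⟨w,x⟩)φ(-⟨w,x⟩)) - y⟨w,x⟩)`:
for `w' = c·w*` with `c ∈ (0,1]`, any `x` and `y ∈ {±1}`,
`L(w',(x,y)) ≤ L(w*,(x,y)) + (3/2)·e^{-|⟨w',x⟩|}`. -/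
theorem logistic_loss_rescaled_bound {d : ℕ}
    (φ : ℝ → ℝ) (hφ : ∀ t, φ t = 1 / (1 + Real.exp (-t)))
    (L : EuclideanSpace ℝ (Fin d) → EuclideanSpace ℝ (Fin d) → ℝ → ℝ)
    (hL : ∀ w x y, L w x y =
      (1/2) * (-Real.log (φ ⟪w, x⟫ * φ (-⟪w, x⟫)) - y * ⟪w, x⟫))
    (wstar w' x : EuclideanSpace ℝ (Fin d)) (y : ℝ)
    (hy : y = 1 ∨ y = -1)
    (c : ℝ) (hc0 : 0 < c) (hc1 : c ≤ 1) (hw' : w' = c • wstar) :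
    L w' x y ≤ L wstar x y + (3/2) * Real.exp (-|⟪w', x⟫|) := by
  set s : ℝ := ⟪wstar, x⟫ with hs
  have ht : ⟪w', x⟫ = c * s := by rw [hw', real_inner_smul_left]
  set t : ℝ := ⟪w', x⟫ with htt
  rw [hL, hL, hφ, hφ, hφ, hφ, neg_log_phi, neg_log_phi]
  -- amplitude comparison
  have habs : |t| = c * |s| := by rw [ht, abs_mul, abs_of_pos hc0]
  have hys : y * s ≤ |s| := by
    rcases hy with h | h <;> rw [h] <;> cases abs_cases s <;> linarith [abs_nonneg s, neg_abs_le s, le_abs_self s]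
  have hcomp : |t| - y * t ≤ |s| - y * s := by
    rw [habs, ht]
    nlinarith [abs_nonneg s]
  have h1 := log_bounds_upper t
  have h2 := log_bounds_lower s
  linarith
end
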